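/- Let B and C be n×n positive semidefinite complex matrices, and let h : [0,∞) → ℝ be a monotonically increasing concave function satisfying h(y) − h(x) ≤ y − x for all 0 ≤ x ≤ y (i.e., h increases with slope at most 1). Then for every index k, λ_k↓(h(C + B) − B) ≤ h(λ_k↓(C)). -/

import Mathlib

open Matrix
open scoped ComplexOrder

/-- The eigenvalues of a square matrix, sorted in non-increasing order
(junk value `0` if the matrix is not Hermitian). -/
noncomputable def eigValsDown {𝕜 : Type*} [RCLike 𝕜] {n : ℕ}
    (A : Matrix (Fin n) (Fin n) 𝕜) : Fin n → ℝ :=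
  if hA : A.IsHermitian then
    fun k => (hA.eigenvalues ∘ Tuple.sort hA.eigenvalues) k.rev
  else 0

/-- Functional calculus: apply a real function to a Hermitian matrix via its spectral
decomposition (junk value `0` if the matrix is not Hermitian). -/
noncomputable def matFun {𝕜 : Type*} [RCLike 𝕜] {n : ℕ} (h : ℝ → ℝ)
    (A : Matrix (Fin n) (Fin n) 𝕜) : Matrix (Fin n) (Fin n) 𝕜 :=
  if hA : A.IsHermitian then
    (hA.eigenvectorUnitary : Matrix (Fin n) (Fin n) 𝕜) *
      Matrix.diagonal (fun i => (h (hA.eigenvalues i) : 𝕜)) *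
      star (hA.eigenvectorUnitary : Matrix (Fin n) (Fin n) 𝕜)
  else 0

/-- The operator norm (largest singular value) of a matrix. -/
noncomputable def opNorm {𝕜 : Type*} [RCLike 𝕜] {n : ℕ}
    (A : Matrix (Fin n) (Fin n) 𝕜) : ℝ :=
  ‖Matrix.toEuclideanCLM (𝕜 := 𝕜) A‖

/-- The matrix absolute value `|M| = (Mᴴ M)^(1/2)`. -/
noncomputable def matAbs {𝕜 : Type*} [RCLike 𝕜] {n : ℕ}
    (A : Matrix (Fin n) (Fin n) 𝕜) : Matrix (Fin n) (Fin n) 𝕜 :=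
  (Matrix.PosSemidef.isHermitian (Matrix.posSemidef_conjTranspose_mul_self A)).eigenvectorUnitary.1 *
    Matrix.diagonal ((↑) ∘ Real.sqrt ∘
      (Matrix.PosSemidef.isHermitian (Matrix.posSemidef_conjTranspose_mul_self A)).eigenvalues) *
    (star (Matrix.PosSemidef.isHermitian
      (Matrix.posSemidef_conjTranspose_mul_self A)).eigenvectorUnitary : Matrix (Fin n) (Fin n) 𝕜)

/-- The Ky Fan `k`-norm: the sum of the `k` largest singular values. -/
noncomputable def kyFanNorm {𝕜 : Type*} [RCLike 𝕜] {n : ℕ} (k : ℕ)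
    (A : Matrix (Fin n) (Fin n) 𝕜) : ℝ :=
  ∑ j ∈ Finset.univ.filter (fun j : Fin n => (j : ℕ) < k), eigValsDown (matAbs A) j

/-! For a unit vector `u` write `q_X(u) = re ⟪u, X u⟫`. Since the eigenvectors of
`M = h(C + B) - B` with eigenvalue `≥ λ_k↓(M)` span a space of dimension `≥ k + 1` and those of `C`
with eigenvalue `≤ λ_k↓(C)` one of dimension `≥ n - k`, some unit `u` lies in both spans. Then
`λ_k↓(M) ≤ q_{h(C+B)}(u) - q_B(u) ≤ h(q_C(u) + q_B(u)) - q_B(u) ≤ h(q_C(u)) ≤ h(λ_k↓(C))`,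
using Jensen's inequality for `h` in an eigenbasis of `C + B`, the slope bound and monotonicity. -/

open Finset
open scoped InnerProductSpace

lemma Orthonormal.inner_eq_zero_of_mem_span_image {𝕜 E κ : Type*} [RCLike 𝕜]
    [NormedAddCommGroup E] [InnerProductSpace 𝕜 E] {v : κ → E} (hv : Orthonormal 𝕜 v)
    {S : Set κ} {j : κ} (hj : j ∉ S) {u : E} (hu : u ∈ Submodule.span 𝕜 (v '' S)) :
    ⟪v j, u⟫_𝕜 = 0 := by
  have hspan : Submodule.span 𝕜 (v '' S) ≤ LinearMap.ker (innerₛₗ 𝕜 (v j)) := by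
    rw [Submodule.span_le]
    rintro _ ⟨i, hi, rfl⟩
    exact hv.inner_eq_zero (ne_of_mem_of_not_mem hi hj).symm
  exact hspan hu

lemma Submodule.exists_norm_eq_one_mem_inf {𝕜 E : Type*} [RCLike 𝕜]
    [NormedAddCommGroup E] [InnerProductSpace 𝕜 E] [FiniteDimensional 𝕜 E]
    {V W : Submodule 𝕜 E} (hVW : Module.finrank 𝕜 E < Module.finrank 𝕜 V + Module.finrank 𝕜 W) :
    ∃ u ∈ V, u ∈ W ∧ ‖u‖ = 1 := by
  have hnd : ¬ Disjoint V W := fun h => hVW.not_ge (Submodule.finrank_add_finrank_le_of_disjoint h)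
  obtain ⟨x, ⟨hxV, hxW⟩, hx0⟩ := Submodule.exists_mem_ne_zero_of_ne_bot (disjoint_iff.not.mp hnd)
  exact ⟨(‖x‖⁻¹ : 𝕜) • x, V.smul_mem _ hxV, W.smul_mem _ hxW, norm_smul_inv_norm hx0⟩

lemma LinearIndependent.finrank_span_image_finset {R M κ : Type*} [DivisionRing R]
    [AddCommGroup M] [Module R M] {v : κ → M} (hv : LinearIndependent R v) (S : Finset κ) :
    Module.finrank R (Submodule.span R (v '' S)) = S.card := by
  rw [Set.image_eq_range, ← Fintype.card_coe S]
  exact finrank_span_eq_card (hv.comp ((↑) : S → κ) Subtype.val_injective)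

namespace Tuple

variable {α : Type*} [LinearOrder α] {n : ℕ}

lemma sub_le_card_filter_sort_le (f : Fin n → α) (i : Fin n) :
    n - i ≤ #{j | f (sort f i) ≤ f j} := by
  rw [← Fin.card_Ici]
  refine card_le_card_of_injOn (sort f) (fun j hj => ?_) (sort f).injective.injOn
  simpa using monotone_sort f (mem_Ici.mp hj)

lemma succ_le_card_filter_le_sort (f : Fin n → α) (i : Fin n) :
    i + 1 ≤ #{j | f j ≤ f (sort f i)} := by
  rw [← Fin.card_Iic]
  refine card_le_card_of_injOn (sort f) (fun j hj => ?_) (sort f).injective.injOn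
  simpa using monotone_sort f (Finset.mem_Iic.mp hj)

end Tuple

namespace Matrix

variable {𝕜 ι : Type*} [RCLike 𝕜] [Fintype ι] [DecidableEq ι]

noncomputable def quadForm (A : Matrix ι ι 𝕜) (x : EuclideanSpace 𝕜 ι) : ℝ :=
  RCLike.re ⟪x, toEuclideanLin A x⟫_𝕜

lemma quadForm_add (A B : Matrix ι ι 𝕜) (x : EuclideanSpace 𝕜 ι) :
    quadForm (A + B) x = quadForm A x + quadForm B x := by
  simp only [quadForm, map_add, LinearMap.add_apply, inner_add_right]

lemma quadForm_sub (A B : Matrix ι ι 𝕜) (x : EuclideanSpace 𝕜 ι) :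
    quadForm (A - B) x = quadForm A x - quadForm B x := by
  simp only [quadForm, map_sub, LinearMap.sub_apply, inner_sub_right]

lemma PosSemidef.quadForm_nonneg {A : Matrix ι ι 𝕜} (hA : A.PosSemidef)
    (x : EuclideanSpace 𝕜 ι) : 0 ≤ quadForm A x := by
  rw [quadForm, toLpLin_apply, EuclideanSpace.inner_eq_star_dotProduct, WithLp.ofLp_toLp,
    dotProduct_comm]
  exact hA.re_dotProduct_nonneg _

section Eigenbasis

variable {κ : Type*} [Fintype κ] {A : Matrix ι ι 𝕜} {e : OrthonormalBasis κ 𝕜 (EuclideanSpace 𝕜 ι)}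
  {μ : κ → ℝ}

lemma quadForm_eq_sum_of_eigenbasis (he : ∀ j, toEuclideanLin A (e j) = (μ j : 𝕜) • e j)
    (x : EuclideanSpace 𝕜 ι) : quadForm A x = ∑ j, μ j * ‖⟪e j, x⟫_𝕜‖ ^ 2 := by
  have hAx : toEuclideanLin A x = ∑ j, ((μ j : 𝕜) * ⟪e j, x⟫_𝕜) • e j := by
    conv_lhs => rw [← e.sum_repr' x]
    simp only [map_sum, map_smul, he, smul_smul, mul_comm]
  rw [quadForm, hAx, inner_sum, map_sum]
  refine sum_congr rfl fun j _ => ?_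
  rw [inner_smul_right, ← inner_conj_symm x (e j), mul_assoc, RCLike.mul_conj]
  norm_cast

lemma le_quadForm_of_mem_span_eigenbasis (he : ∀ j, toEuclideanLin A (e j) = (μ j : 𝕜) • e j)
    {S : Set κ} {m : ℝ} (hm : ∀ j ∈ S, m ≤ μ j) {u : EuclideanSpace 𝕜 ι}
    (hu : u ∈ Submodule.span 𝕜 (e '' S)) : m * ‖u‖ ^ 2 ≤ quadForm A u := by
  rw [quadForm_eq_sum_of_eigenbasis he, ← e.sum_sq_norm_inner_right, mul_sum]
  refine sum_le_sum fun j _ => ?_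
  by_cases hj : j ∈ S
  · exact mul_le_mul_of_nonneg_right (hm j hj) (by positivity)
  · simp [e.orthonormal.inner_eq_zero_of_mem_span_image hj hu]

lemma quadForm_le_of_mem_span_eigenbasis (he : ∀ j, toEuclideanLin A (e j) = (μ j : 𝕜) • e j)
    {S : Set κ} {m : ℝ} (hm : ∀ j ∈ S, μ j ≤ m) {u : EuclideanSpace 𝕜 ι}
    (hu : u ∈ Submodule.span 𝕜 (e '' S)) : quadForm A u ≤ m * ‖u‖ ^ 2 := by
  rw [quadForm_eq_sum_of_eigenbasis he, ← e.sum_sq_norm_inner_right, mul_sum]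
  refine sum_le_sum fun j _ => ?_
  by_cases hj : j ∈ S
  · exact mul_le_mul_of_nonneg_right (hm j hj) (by positivity)
  · simp [e.orthonormal.inner_eq_zero_of_mem_span_image hj hu]

end Eigenbasis

lemma IsHermitian.toEuclideanLin_eigenvectorBasis {A : Matrix ι ι 𝕜} (hA : A.IsHermitian) (j : ι) :
    toEuclideanLin A (hA.eigenvectorBasis j) = (hA.eigenvalues j : 𝕜) • hA.eigenvectorBasis j := by
  rw [toLpLin_apply, hA.mulVec_eigenvectorBasis j]
  ext i
  exact RCLike.real_smul_eq_coe_smul (K := 𝕜) _ _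

section FunctionalCalculus

variable {n : ℕ}

lemma isHermitian_matFun {A : Matrix (Fin n) (Fin n) 𝕜} (hA : A.IsHermitian) (h : ℝ → ℝ) :
    (matFun h A).IsHermitian := by
  rw [matFun, dif_pos hA, star_eq_conjTranspose]
  refine isHermitian_mul_mul_conjTranspose _ (isHermitian_diagonal_iff.mpr fun i => ?_)
  exact RCLike.conj_ofReal _

lemma IsHermitian.toEuclideanLin_matFun_eigenvectorBasis {A : Matrix (Fin n) (Fin n) 𝕜}
    (hA : A.IsHermitian) (h : ℝ → ℝ) (j : Fin n) :
    toEuclideanLin (matFun h A) (hA.eigenvectorBasis j)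
      = (h (hA.eigenvalues j) : 𝕜) • hA.eigenvectorBasis j := by
  rw [toLpLin_apply, matFun, dif_pos hA, ← mulVec_mulVec, ← mulVec_mulVec,
    hA.star_eigenvectorUnitary_mulVec j, diagonal_mulVec_single, mul_one]
  ext i
  simp [mulVec_single, RCLike.real_smul_eq_coe_mul, mul_comm]

lemma IsHermitian.quadForm_matFun_le_of_concaveOn {A : Matrix (Fin n) (Fin n) 𝕜}
    (hA : A.IsHermitian) {s : Set ℝ} {h : ℝ → ℝ} (hh : ConcaveOn ℝ s h)
    (hs : ∀ j, hA.eigenvalues j ∈ s) {u : EuclideanSpace 𝕜 (Fin n)} (hu : ‖u‖ = 1) :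
    quadForm (matFun h A) u ≤ h (quadForm A u) := by
  rw [quadForm_eq_sum_of_eigenbasis (hA.toEuclideanLin_matFun_eigenvectorBasis h),
    quadForm_eq_sum_of_eigenbasis hA.toEuclideanLin_eigenvectorBasis]
  have hw : ∑ j, ‖⟪hA.eigenvectorBasis j, u⟫_𝕜‖ ^ 2 = 1 := by
    rw [OrthonormalBasis.sum_sq_norm_inner_right, hu, one_pow]
  simpa only [smul_eq_mul, mul_comm] using
    hh.le_map_sum (fun j _ => by positivity) hw (fun j _ => hs j)

end FunctionalCalculus

section SortedEigenvalues

variable {n : ℕ} {A : Matrix (Fin n) (Fin n) 𝕜}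

lemma IsHermitian.eigValsDown_eq (hA : A.IsHermitian) (k : Fin n) :
    eigValsDown A k = hA.eigenvalues (Tuple.sort hA.eigenvalues k.rev) := by
  rw [eigValsDown, dif_pos hA]
  rfl

lemma IsHermitian.succ_le_card_filter_eigValsDown_le (hA : A.IsHermitian) (k : Fin n) :
    k + 1 ≤ #{j | eigValsDown A k ≤ hA.eigenvalues j} := by
  have := Tuple.sub_le_card_filter_sort_le hA.eigenvalues k.rev
  rw [Fin.val_rev] at this
  rw [hA.eigValsDown_eq]
  omega

lemma IsHermitian.sub_le_card_filter_le_eigValsDown (hA : A.IsHermitian) (k : Fin n) :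
    n - k ≤ #{j | hA.eigenvalues j ≤ eigValsDown A k} := by
  have := Tuple.succ_le_card_filter_le_sort hA.eigenvalues k.rev
  rw [Fin.val_rev] at this
  rw [hA.eigValsDown_eq]
  omega

lemma IsHermitian.exists_eigValsDown_le_quadForm_and_quadForm_le_eigValsDown
    {A' : Matrix (Fin n) (Fin n) 𝕜} (hA : A.IsHermitian) (hA' : A'.IsHermitian) (k : Fin n) :
    ∃ u : EuclideanSpace 𝕜 (Fin n), ‖u‖ = 1 ∧
      eigValsDown A k ≤ quadForm A u ∧ quadForm A' u ≤ eigValsDown A' k := by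
  set S : Finset (Fin n) := {j | eigValsDown A k ≤ hA.eigenvalues j}
  set T : Finset (Fin n) := {j | hA'.eigenvalues j ≤ eigValsDown A' k}
  obtain ⟨u, huS, huT, hu⟩ := Submodule.exists_norm_eq_one_mem_inf
    (V := Submodule.span 𝕜 (hA.eigenvectorBasis '' S))
    (W := Submodule.span 𝕜 (hA'.eigenvectorBasis '' T)) (by
      rw [finrank_euclideanSpace_fin,
        hA.eigenvectorBasis.orthonormal.linearIndependent.finrank_span_image_finset,
        hA'.eigenvectorBasis.orthonormal.linearIndependent.finrank_span_image_finset]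
      have hS : k + 1 ≤ #S := hA.succ_le_card_filter_eigValsDown_le k
      have hT : n - k ≤ #T := hA'.sub_le_card_filter_le_eigValsDown k
      omega)
  refine ⟨u, hu, ?_, ?_⟩
  · simpa [hu] using le_quadForm_of_mem_span_eigenbasis hA.toEuclideanLin_eigenvectorBasis
      (fun j hj => by simpa [S] using hj) huS
  · simpa [hu] using quadForm_le_of_mem_span_eigenbasis hA'.toEuclideanLin_eigenvectorBasis
      (fun j hj => by simpa [T] using hj) huT

end SortedEigenvalues

end Matrix

/-- for PSD `B, C` and a monotonically increasing concave `h` on `[0,∞)`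
with slope at most `1`, one has `λ_k↓(h(C + B) - B) ≤ h(λ_k↓(C))` for every `k`. -/
theorem stmt2 {n : ℕ} (B C : Matrix (Fin n) (Fin n) ℂ)
    (hB : B.PosSemidef) (hC : C.PosSemidef)
    (h : ℝ → ℝ) (h_mono : MonotoneOn h (Set.Ici (0 : ℝ)))
    (h_conc : ConcaveOn ℝ (Set.Ici (0 : ℝ)) h)
    (h_slope : ∀ x y : ℝ, 0 ≤ x → x ≤ y → h y - h x ≤ y - x)
    (k : Fin n) :
    eigValsDown (matFun h (C + B) - B) k ≤ h (eigValsDown C k) := by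
  have hCB := hC.add hB
  obtain ⟨u, hu, hle, hCu⟩ :=
    ((isHermitian_matFun hCB.isHermitian h).sub hB.isHermitian)
      |>.exists_eigValsDown_le_quadForm_and_quadForm_le_eigValsDown hC.isHermitian k
  have hjensen :=
    hCB.isHermitian.quadForm_matFun_le_of_concaveOn h_conc hCB.eigenvalues_nonneg hu
  have hC0 := hC.quadForm_nonneg u
  have hB0 := hB.quadForm_nonneg u
  rw [quadForm_sub] at hle
  rw [quadForm_add] at hjensen
  calc eigValsDown (matFun h (C + B) - B) k
      ≤ h (quadForm C u + quadForm B u) - quadForm B u := by linarith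
    _ ≤ h (quadForm C u) := by linarith [h_slope _ _ hC0 (le_add_of_nonneg_right hB0)]
    _ ≤ h (eigValsDown C k) := h_mono hC0 (hC0.trans hCu) hCu
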